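/- In the Gaussian thresholding model with π = 1/2, the limit of the attenuation function γ as β₁ᵍ → ∞ equals 1/(1 + Φ(β₀ᵍ − c)) < 1, and the limit as β₁ᵍ → −∞ equals −1/(1 + Φ(c − β₀ᵍ)) > −1. -/

import Mathlib

open MeasureTheory ProbabilityTheory Filter

/-- Standard normal CDF. -/
noncomputable def Phi (x : ℝ) : ℝ := ((gaussianReal 0 1) (Set.Iic x)).toReal

/-- Attenuation function `γ(β₁ᵍ, π, c, β₀ᵍ) = π(ω − E)/(E(1 − E))` with
`E = ζ(1−π) + ωπ`, `ω = Φ(β₁ᵍ + β₀ᵍ − c)`, `ζ = Φ(β₀ᵍ − c)`. -/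
noncomputable def gammaFn (b1 p c b0 : ℝ) : ℝ :=
  p * (Phi (b1 + b0 - c) - (Phi (b0 - c) * (1 - p) + Phi (b1 + b0 - c) * p)) /
    ((Phi (b0 - c) * (1 - p) + Phi (b1 + b0 - c) * p) *
      (1 - (Phi (b0 - c) * (1 - p) + Phi (b1 + b0 - c) * p)))

/-! For `π = 1/2`, `γ` is the rational function `(ω - ζ) / ((ζ + ω)(2 - ζ - ω))` of
`ζ = Φ(β₀ᵍ - c)` and `ω = Φ(β₀ᵍ + β₁ᵍ - c)`. Since the Gaussian law is equivalent to Lebesgue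
measure, `0 < ζ < 1`, so this function is continuous at `ω = 1` and `ω = 0`, the limits of `ω`
as `β₁ᵍ → ±∞`. The symmetry `Φ(-x) = 1 - Φ(x)` rewrites `2 - ζ` as `1 + Φ(c - β₀ᵍ)`. -/

lemma MeasureTheory.Measure.AbsolutelyContinuous.measureReal_pos {α : Type*}
    [MeasurableSpace α] {μ ν : Measure α} [IsFiniteMeasure μ] (h : ν ≪ μ) {s : Set α}
    (hs : ν s ≠ 0) : 0 < μ.real s :=
  ENNReal.toReal_pos (fun h0 ↦ hs (h h0)) (measure_ne_top μ s)

namespace ProbabilityTheory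

variable {μ : Measure ℝ} [IsProbabilityMeasure μ]

lemma cdf_pos_of_absolutelyContinuous (h : volume ≪ μ) (x : ℝ) : 0 < cdf μ x := by
  rw [cdf_eq_real]
  exact h.measureReal_pos (by simp)

lemma cdf_lt_one_of_absolutelyContinuous (h : volume ≪ μ) (x : ℝ) : cdf μ x < 1 := by
  have hIoi : 0 < μ.real (Set.Ioi x) := h.measureReal_pos (by simp)
  rw [cdf_eq_real, ← Set.compl_Iic, probReal_compl_eq_one_sub measurableSet_Iic] at *
  linarith

lemma cdf_neg_of_map_neg (hac : μ ≪ volume) (hsymm : μ.map (fun x ↦ -x) = μ) (x : ℝ) :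
    cdf μ (-x) = 1 - cdf μ x := by
  have hx : μ {x} = 0 := hac Real.volume_singleton
  calc cdf μ (-x) = μ.real (Set.Ici x) := by
        rw [cdf_eq_real]
        conv_lhs => rw [← hsymm]
        rw [map_measureReal_apply (by fun_prop) measurableSet_Iic]
        congr 1
        ext y
        simp
    _ = μ.real (Set.Ioi x) := measureReal_congr (Ioi_ae_eq_Ici' hx).symm
    _ = 1 - cdf μ x := by
        rw [cdf_eq_real, ← Set.compl_Iic, probReal_compl_eq_one_sub measurableSet_Iic]

end ProbabilityTheory

open Topology

lemma Phi_eq_cdf : Phi = cdf (gaussianReal 0 1) :=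
  funext fun x ↦ (cdf_eq_real _ x).symm

lemma Phi_pos (x : ℝ) : 0 < Phi x := by
  rw [Phi_eq_cdf]
  exact cdf_pos_of_absolutelyContinuous (gaussianReal_absolutelyContinuous' 0 one_ne_zero) x

lemma Phi_lt_one (x : ℝ) : Phi x < 1 := by
  rw [Phi_eq_cdf]
  exact cdf_lt_one_of_absolutelyContinuous (gaussianReal_absolutelyContinuous' 0 one_ne_zero) x

lemma Phi_neg (x : ℝ) : Phi (-x) = 1 - Phi x := by
  rw [Phi_eq_cdf]
  refine cdf_neg_of_map_neg (gaussianReal_absolutelyContinuous 0 one_ne_zero) ?_ x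
  rw [gaussianReal_map_neg, neg_zero]

lemma tendsto_Phi_atTop : Tendsto Phi atTop (𝓝 1) :=
  Phi_eq_cdf ▸ tendsto_cdf_atTop _

lemma tendsto_Phi_atBot : Tendsto Phi atBot (𝓝 0) :=
  Phi_eq_cdf ▸ tendsto_cdf_atBot _

noncomputable def halfAttenuation (ζ ω : ℝ) : ℝ := (ω - ζ) / ((ζ + ω) * (2 - ζ - ω))

lemma gammaFn_half (b1 c b0 : ℝ) :
    gammaFn b1 (1/2) c b0 = halfAttenuation (Phi (b0 - c)) (Phi (b1 + (b0 - c))) := by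
  rw [gammaFn, halfAttenuation, add_sub_assoc,
    ← div_div_div_cancel_right₀ (four_ne_zero' ℝ) (_ - _)]
  ring

lemma continuousAt_halfAttenuation {ζ ω : ℝ} (h : (ζ + ω) * (2 - ζ - ω) ≠ 0) :
    ContinuousAt (halfAttenuation ζ) ω :=
  ContinuousAt.div (by fun_prop) (by fun_prop) h

lemma halfAttenuation_one {ζ : ℝ} (h₁ : ζ ≠ 1) : halfAttenuation ζ 1 = 1 / (1 + ζ) := by
  rw [halfAttenuation, show 2 - ζ - 1 = 1 - ζ by ring, mul_comm, ← div_div,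
    div_self (sub_ne_zero.mpr h₁.symm), add_comm]

lemma halfAttenuation_zero {ζ : ℝ} (h₀ : ζ ≠ 0) : halfAttenuation ζ 0 = -1 / (2 - ζ) := by
  rw [halfAttenuation, zero_sub, add_zero, sub_zero, neg_div, ← div_div, div_self h₀, neg_div]

/-- For π = 1/2, γ(β₁ᵍ, 1/2, c, β₀ᵍ) → 1/(1 + Φ(β₀ᵍ − c)) < 1 as β₁ᵍ → ∞, and
γ → −1/(1 + Φ(c − β₀ᵍ)) > −1 as β₁ᵍ → −∞. -/
theorem stmt_18 (c b0 : ℝ) :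
    (Tendsto (fun b1 => gammaFn b1 (1/2) c b0) atTop (nhds (1 / (1 + Phi (b0 - c)))) ∧
      1 / (1 + Phi (b0 - c)) < 1) ∧
    (Tendsto (fun b1 => gammaFn b1 (1/2) c b0) atBot (nhds (-1 / (1 + Phi (c - b0)))) ∧
      -1 < -1 / (1 + Phi (c - b0))) := by
  have hζ₀ := Phi_pos (b0 - c)
  have hζ₁ := Phi_lt_one (b0 - c)
  have hsymm : 1 + Phi (c - b0) = 2 - Phi (b0 - c) := by
    rw [← neg_sub, Phi_neg]
    ring
  simp_rw [gammaFn_half, hsymm]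
  refine ⟨⟨?_, by rw [div_lt_one (by linarith)]; linarith⟩,
    ⟨?_, by rw [neg_div, neg_lt_neg_iff, div_lt_one (by linarith)]; linarith⟩⟩
  · rw [← halfAttenuation_one hζ₁.ne]
    refine (continuousAt_halfAttenuation ?_).tendsto.comp
      (tendsto_Phi_atTop.comp (tendsto_atTop_add_const_right _ _ tendsto_id))
    exact mul_ne_zero (by linarith) (by linarith)
  · rw [← halfAttenuation_zero hζ₀.ne']
    refine (continuousAt_halfAttenuation ?_).tendsto.comp
      (tendsto_Phi_atBot.comp (tendsto_atBot_add_const_right _ _ tendsto_id))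
    exact mul_ne_zero (by linarith) (by linarith)
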